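/- arXiv:2310.14381 — 3 statements merged into one kernel-verified Lean document; each statement's English description precedes it below -/
import Mathlib

section
/- Let K ⊂ ℝⁿ be a convex body with |K| = 1 and let N ≥ 1 be an integer. Then 2^{nN} · sup_{x ∈ ℝⁿ} (1_K^{*2^N})(x) ≤ (2^n · Δ_KB(K))^{2^N − 1}. (Equivalently, with S_N the average of 2^N independent uniform random points of K, ‖f_{S_N}‖_∞^{1/(2^N − 1)} ≤ 2^n Δ_KB(K).) -/
/-!
Write `f_m = 1_K^{*m}`. By convexity `f_m` vanishes outside `m • K`, and `f_{2m} = f_m ∗ f_m`, so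
`f_{2m}(x) ≤ ‖f_m‖_∞² · |mK ∩ (x - mK)| = ‖f_m‖_∞² · mⁿ · |K ∩ (x/m - K)|
  ≤ ‖f_m‖_∞² · mⁿ · Δ_KB(K)`.
Iterating from `m = 1` to `m = 2^N` gives the bound. Working with `ℝ≥0∞`-valued convolutions makes
associativity free of integrability conditions; `|K| = 1` bounds every `f_m` by `1`, which
transfers the estimate to the real-valued convolution powers.
-/

open MeasureTheory Metric Set
open scoped ENNReal Pointwise RealInnerProductSpace

noncomputable section

/-- Euclidean space `ℝⁿ`. -/
abbrev E (n : ℕ) := EuclideanSpace ℝ (Fin n)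

/-- A convex body: a compact convex set with nonempty interior. -/
def IsConvexBody {n : ℕ} (K : Set (E n)) : Prop :=
  Convex ℝ K ∧ IsCompact K ∧ (interior K).Nonempty

/-- The Kovner–Besicovitch measure of symmetry
`Δ_KB(K) = sup_x |K ∩ (x - K)| / |K|`. -/
def deltaKB {n : ℕ} (K : Set (E n)) : ℝ :=
  ⨆ x : E n, (volume (K ∩ (({x} : Set (E n)) - K))).toReal / (volume K).toReal

/-- The `ψ₂`-norm of the marginal `⟨·, θ⟩` with respect to the uniform probability
measure on a volume-one convex body `K`:
`inf {λ > 0 : ∫_K exp(⟨x,θ⟩² / λ²) dx ≤ 2}`. -/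
def psi2Norm {n : ℕ} (K : Set (E n)) (θ : E n) : ℝ :=
  sInf {l : ℝ | 0 < l ∧ (∫ x in K, Real.exp (⟪x, θ⟫ ^ 2 / l ^ 2)) ≤ 2}

/-- The rotation-invariant (normalized Haar) probability measure on the unit
sphere `S^{n-1} ⊂ ℝⁿ`. -/
def sphereProb (n : ℕ) : Measure (sphere (0 : E n) 1) :=
  ((volume : Measure (E n)).toSphere Set.univ)⁻¹ • (volume : Measure (E n)).toSphere

/-- The translative covering number `N(K, T)`. -/
def coveringNumber {n : ℕ} (K T : Set (E n)) : ℕ :=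
  sInf {N : ℕ | ∃ x : Fin N → E n, K ⊆ ⋃ i, x i +ᵥ T}

/-- Hadwiger's covering number: the least `N` such that `K` is covered by `N`
translates of its interior. -/
def hadwigerN {n : ℕ} (K : Set (E n)) : ℕ :=
  coveringNumber K (interior K)

/-- `K` is isotropic with isotropic constant `L`: it has volume one, barycenter
at the origin, and `∫_K ⟨x,θ⟩² dx = L²` for every unit direction `θ`. -/
def IsIsotropic {n : ℕ} (K : Set (E n)) (L : ℝ) : Prop :=
  volume K = 1 ∧ (∫ x in K, x) = 0 ∧ 0 < L ∧
    ∀ θ ∈ sphere (0 : E n) 1, (∫ x in K, ⟪x, θ⟫ ^ 2) = L ^ 2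

/-- Convolution of real-valued functions on `ℝⁿ`: `(f ∗ g)(x) = ∫ f(x - y) g(y) dy`. -/
def conv {n : ℕ} (f g : E n → ℝ) : E n → ℝ :=
  fun x => ∫ y, f (x - y) * g y

/-- `convPow f m` is the `m`-fold convolution power `f^{*m}` (for `m ≥ 1`);
`convPow f 0` is junk. -/
def convPow {n : ℕ} (f : E n → ℝ) : ℕ → E n → ℝ
  | 0 => fun _ => 0
  | 1 => f
  | (m + 2) => conv (convPow f (m + 1)) f

namespace MeasureTheory

section LConvPow

variable {G : Type*} [MeasurableSpace G]

/-- Iterated convolution `f ⋆ₗ ⋯ ⋆ₗ f` with `m` factors (junk value `0` at `m = 0`). -/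
def lconvPow [AddGroup G] (f : G → ℝ≥0∞) (μ : Measure G) : ℕ → G → ℝ≥0∞
  | 0 => 0
  | 1 => f
  | m + 2 => f ⋆ₗ[μ] lconvPow f μ (m + 1)

variable {f g : G → ℝ≥0∞} {μ : Measure G} {m : ℕ}

@[simp]
lemma lconvPow_one [AddGroup G] : lconvPow f μ 1 = f := rfl

lemma lconvPow_succ [AddGroup G] (hm : m ≠ 0) :
    lconvPow f μ (m + 1) = f ⋆ₗ[μ] lconvPow f μ m := by
  obtain ⟨m, rfl⟩ := Nat.exists_eq_succ_of_ne_zero hm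
  rfl

lemma measurable_lconvPow [AddGroup G] [MeasurableAdd₂ G] [MeasurableNeg G] [SFinite μ]
    (hf : Measurable f) : ∀ m, Measurable (lconvPow f μ m)
  | 0 => measurable_const
  | 1 => hf
  | m + 2 => measurable_lconvolution μ hf (measurable_lconvPow hf (m + 1))

lemma lconvPow_add [AddGroup G] [MeasurableAdd₂ G] [MeasurableNeg G] [SFinite μ]
    [μ.IsAddLeftInvariant] (hf : Measurable f) {a b : ℕ} (ha : a ≠ 0) (hb : b ≠ 0) :
    lconvPow f μ (a + b) = lconvPow f μ a ⋆ₗ[μ] lconvPow f μ b := by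
  induction a, Nat.one_le_iff_ne_zero.mpr ha using Nat.le_induction with
  | base => rw [add_comm, lconvPow_succ hb, lconvPow_one]
  | succ a ha ih =>
    rw [add_right_comm, lconvPow_succ (by omega), ih (by omega), lconvPow_succ (by omega),
      lconvolution_assoc hf (measurable_lconvPow hf a) (measurable_lconvPow hf b)]

lemma lconvPow_le_lintegral_pow [AddGroup G] (hf : Measurable f) (hf_le : ∀ x, f x ≤ 1) :
    ∀ m x, lconvPow f μ m x ≤ (∫⁻ y, f y ∂μ) ^ (m - 1)
  | 0, _ => zero_le
  | 1, x => by simpa using hf_le x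
  | m + 2, x => calc
      ∫⁻ y, f y * lconvPow f μ (m + 1) (-y + x) ∂μ
        ≤ ∫⁻ y, f y * (∫⁻ y, f y ∂μ) ^ m ∂μ :=
          lintegral_mono fun y => by gcongr; exact lconvPow_le_lintegral_pow hf hf_le _ _
      _ = (∫⁻ y, f y ∂μ) ^ (m + 2 - 1) := by
          rw [lintegral_mul_const _ hf, ← pow_succ']
          rfl

lemma support_lconvolution_subset [AddGroup G] :
    Function.support (f ⋆ₗ[μ] g) ⊆ Function.support f + Function.support g := by
  intro x hx
  by_contra hxfg
  have hzero : ∀ y, f y * g (-y + x) = 0 := fun y => by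
    by_contra hy
    obtain ⟨hfy, hgy⟩ := mul_ne_zero_iff.mp hy
    exact hxfg ⟨y, hfy, -y + x, hgy, add_neg_cancel_left y x⟩
  exact hx (by simp [lconvolution_def, hzero])

lemma support_lconvPow_subset_smul [AddCommGroup G] [Module ℝ G] {K : Set G} (hK : Convex ℝ K)
    (hfK : Function.support f ⊆ K) {m : ℕ} (hm : m ≠ 0) :
    Function.support (lconvPow f μ m) ⊆ (m : ℝ) • K := by
  induction m, Nat.one_le_iff_ne_zero.mpr hm using Nat.le_induction with
  | base => simpa using hfK
  | succ m hm ih =>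
    rw [lconvPow_succ (by omega), Nat.cast_succ, add_comm, hK.add_smul zero_le_one m.cast_nonneg,
      one_smul]
    exact support_lconvolution_subset.trans (Set.add_subset_add hfK (ih (by omega)))

lemma lconvolution_le_of_le_indicator [AddGroup G] [MeasurableAdd G] [MeasurableNeg G]
    {A B : Set G} (hA : MeasurableSet A) (hB : MeasurableSet B) {S T : ℝ≥0∞}
    (hf : ∀ y, f y ≤ S * A.indicator 1 y) (hg : ∀ y, g y ≤ T * B.indicator 1 y) (x : G) :
    (f ⋆ₗ[μ] g) x ≤ S * T * μ (A ∩ ({x} - B)) := by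
  have hxB : {x} - B = (fun y => -y + x) ⁻¹' B := by
    ext y
    simp only [Set.singleton_sub, Set.mem_image, Set.mem_preimage]
    constructor
    · rintro ⟨b, hb, rfl⟩
      simpa using hb
    · exact fun hy => ⟨-y + x, hy, by simp [sub_eq_add_neg]⟩
  have hAB : MeasurableSet (A ∩ ({x} - B)) :=
    hA.inter (hxB ▸ hB.preimage (measurable_neg.add_const x))
  calc (f ⋆ₗ[μ] g) x
      ≤ ∫⁻ y, S * T * (A ∩ ({x} - B)).indicator 1 y ∂μ := by
        refine lintegral_mono fun y => ?_
        rw [Set.inter_indicator_one, hxB, Pi.mul_apply, mul_mul_mul_comm]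
        exact mul_le_mul' (hf y) (hg _)
    _ = S * T * μ (A ∩ ({x} - B)) := by
        rw [lintegral_const_mul _ (measurable_one.indicator hAB), lintegral_indicator_one hAB]

end LConvPow

end MeasureTheory

section KovnerBesicovitch

variable {n : ℕ} {K : Set (E n)}

/-- `|K| · Δ_KB(K)`, as an extended real. -/
def maxSelfOverlap (K : Set (E n)) : ℝ≥0∞ :=
  ⨆ x : E n, volume (K ∩ ({x} - K))

lemma deltaKB_eq_toReal_maxSelfOverlap (hvol : volume K = 1) :
    deltaKB K = (maxSelfOverlap K).toReal := by
  have hfin : ∀ x : E n, volume (K ∩ ({x} - K)) ≠ ∞ := fun x =>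
    ne_top_of_le_ne_top (hvol ▸ ENNReal.one_ne_top) (measure_mono Set.inter_subset_left)
  rw [deltaKB, maxSelfOverlap, hvol, ENNReal.toReal_iSup hfin]
  simp

lemma volume_smul_inter_singleton_sub (K : Set (E n)) {c : ℝ} (hc : 0 < c) (x : E n) :
    volume (c • K ∩ ({x} - c • K)) = ENNReal.ofReal (c ^ n) * volume (K ∩ ({c⁻¹ • x} - K)) := by
  have hscale : c • (K ∩ ({c⁻¹ • x} - K)) = c • K ∩ ({x} - c • K) := by
    rw [Set.smul_set_inter₀ hc.ne']
    congr 1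
    simp only [Set.singleton_sub, ← Set.image_smul, Set.image_image, smul_sub,
      smul_inv_smul₀ hc.ne']
  rw [← hscale, Measure.addHaar_smul_of_nonneg _ hc.le, finrank_euclideanSpace_fin]

lemma convPow_indicator_eq_toReal (hKm : MeasurableSet K) (hKfin : volume K ≠ ∞) :
    ∀ m (x : E n), convPow (K.indicator fun _ => (1 : ℝ)) m x =
      (lconvPow (K.indicator 1) volume m x).toReal
  | 0, _ => rfl
  | 1, x => by by_cases hx : x ∈ K <;> simp [convPow, hx]
  | m + 2, x => by
    have hKind : Measurable (K.indicator (1 : E n → ℝ≥0∞)) := measurable_one.indicator hKm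
    have hle : ∀ y, K.indicator (1 : E n → ℝ≥0∞) y ≤ 1 := Set.indicator_le_self K 1
    have hfin : ∀ y, K.indicator 1 y * lconvPow (K.indicator 1) volume (m + 1) (-y + x) < ∞ :=
      fun y => by
        refine ENNReal.mul_lt_top ((hle y).trans_lt ENNReal.one_lt_top) ?_
        refine (lconvPow_le_lintegral_pow hKind hle _ _).trans_lt ?_
        simpa [lintegral_indicator_one hKm] using ENNReal.pow_lt_top hKfin.lt_top
    calc ∫ y, convPow (K.indicator fun _ => (1 : ℝ)) (m + 1) (x - y) * K.indicator (fun _ => 1) y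
        = ∫ y, (K.indicator 1 y * lconvPow (K.indicator 1) volume (m + 1) (-y + x)).toReal := by
          congr 1 with y
          rw [convPow_indicator_eq_toReal hKm hKfin (m + 1), ENNReal.toReal_mul, mul_comm,
            neg_add_eq_sub]
          by_cases hy : y ∈ K <;> simp [hy]
      _ = (∫⁻ y, K.indicator 1 y * lconvPow (K.indicator 1) volume (m + 1) (-y + x)).toReal :=
          integral_toReal (hKind.mul ((measurable_lconvPow hKind _).comp
            (measurable_neg.add_const x))).aemeasurable (Filter.Eventually.of_forall hfin)

lemma lconvPow_two_mul_le (hK : Convex ℝ K) (hKm : MeasurableSet K) {m : ℕ} (hm : m ≠ 0)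
    (x : E n) :
    lconvPow (K.indicator 1) volume (2 * m) x ≤
      (⨆ y, lconvPow (K.indicator 1) volume m y) ^ 2 * ((m : ℝ≥0∞) ^ n * maxSelfOverlap K) := by
  set P := lconvPow (K.indicator 1) volume m
  have hmK : MeasurableSet ((m : ℝ) • K) := hKm.const_smul_of_ne_zero (by positivity)
  have hP : ∀ y, P y ≤ (⨆ y, P y) * ((m : ℝ) • K).indicator 1 y := fun y => by
    by_cases hy : y ∈ (m : ℝ) • K
    · simpa [hy] using le_iSup P y
    · have : P y = 0 := Function.notMem_support.mp fun h => hy <|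
        support_lconvPow_subset_smul hK Set.support_indicator_subset hm h
      simp [this]
  calc lconvPow (K.indicator 1) volume (2 * m) x
      = (P ⋆ₗ P) x := by rw [two_mul, lconvPow_add (measurable_one.indicator hKm) hm hm]
    _ ≤ (⨆ y, P y) * (⨆ y, P y) * volume ((m : ℝ) • K ∩ ({x} - (m : ℝ) • K)) :=
        lconvolution_le_of_le_indicator hmK hmK hP hP x
    _ = (⨆ y, P y) ^ 2 * ((m : ℝ≥0∞) ^ n * volume (K ∩ ({(m : ℝ)⁻¹ • x} - K))) := by
        rw [volume_smul_inter_singleton_sub K (by positivity), sq, ENNReal.ofReal_pow m.cast_nonneg,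
          ENNReal.ofReal_natCast]
    _ ≤ (⨆ y, P y) ^ 2 * ((m : ℝ≥0∞) ^ n * maxSelfOverlap K) := by
        gcongr
        exact le_iSup (fun z => volume (K ∩ ({z} - K))) _

lemma pow_mul_iSup_lconvPow_two_pow_le (hK : Convex ℝ K) (hKm : MeasurableSet K) :
    ∀ N : ℕ, (2 : ℝ≥0∞) ^ (n * N) * ⨆ x, lconvPow (K.indicator 1) volume (2 ^ N) x ≤
      (2 ^ n * maxSelfOverlap K) ^ (2 ^ N - 1)
  | 0 => by
    simpa using iSup_le (Set.indicator_le_self K 1)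
  | N + 1 => by
    set S := ⨆ x, lconvPow (K.indicator 1) volume (2 ^ N) x
    set D := (2 : ℝ≥0∞) ^ n * maxSelfOverlap K
    have hdouble : ⨆ x, lconvPow (K.indicator 1) volume (2 ^ (N + 1)) x ≤
        S ^ 2 * (((2 ^ N : ℕ) : ℝ≥0∞) ^ n * maxSelfOverlap K) :=
      iSup_le fun x => by
        simpa [pow_succ'] using lconvPow_two_mul_le hK hKm (pow_ne_zero N two_ne_zero) x
    have hexp : 2 ^ (N + 1) - 1 = (2 ^ N - 1) * 2 + 1 := by
      have := Nat.one_le_two_pow (n := N)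
      rw [pow_succ]
      omega
    calc (2 : ℝ≥0∞) ^ (n * (N + 1)) * ⨆ x, lconvPow (K.indicator 1) volume (2 ^ (N + 1)) x
        ≤ 2 ^ (n * (N + 1)) * (S ^ 2 * (((2 ^ N : ℕ) : ℝ≥0∞) ^ n * maxSelfOverlap K)) := by
          gcongr
      _ = (2 ^ (n * N) * S) ^ 2 * D := by
          push_cast
          ring
      _ ≤ (D ^ (2 ^ N - 1)) ^ 2 * D := by
          gcongr
          exact pow_mul_iSup_lconvPow_two_pow_le hK hKm N
      _ = D ^ (2 ^ (N + 1) - 1) := by rw [← pow_mul, ← pow_succ, hexp]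

end KovnerBesicovitch

theorem sup_density_average_le_pow_deltaKB_general (n : ℕ) (K : Set (E n)) (hK : IsConvexBody K)
    (hvol : volume K = 1) (N : ℕ) :
    (2 : ℝ) ^ (n * N) *
        (⨆ x : E n, convPow (Set.indicator K (fun _ => (1 : ℝ))) (2 ^ N) x) ≤
      ((2 : ℝ) ^ n * deltaKB K) ^ (2 ^ N - 1) := by
  obtain ⟨hconv, hcompact, -⟩ := hK
  have hKm := hcompact.measurableSet
  have hP_le : ∀ x, lconvPow (K.indicator 1) volume (2 ^ N) x ≤ 1 := fun x => by
    simpa [lintegral_indicator_one hKm, hvol] using lconvPow_le_lintegral_pow (μ := volume)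
      (measurable_one.indicator hKm) (Set.indicator_le_self K 1) (2 ^ N) x
  have hΔ_le : maxSelfOverlap K ≤ 1 :=
    iSup_le fun x => hvol ▸ measure_mono Set.inter_subset_left
  have hsup : (⨆ x, convPow (K.indicator fun _ => (1 : ℝ)) (2 ^ N) x) =
      (⨆ x, lconvPow (K.indicator 1) volume (2 ^ N) x).toReal := by
    rw [ENNReal.toReal_iSup fun x => ne_top_of_le_ne_top ENNReal.one_ne_top (hP_le x)]
    simp_rw [convPow_indicator_eq_toReal hKm (hvol ▸ ENNReal.one_ne_top)]
  have hbound_ne_top : ((2 : ℝ≥0∞) ^ n * maxSelfOverlap K) ^ (2 ^ N - 1) ≠ ∞ :=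
    ENNReal.pow_ne_top (ENNReal.mul_ne_top (ENNReal.pow_ne_top ENNReal.ofNat_ne_top)
      (ne_top_of_le_ne_top ENNReal.one_ne_top hΔ_le))
  rw [hsup, deltaKB_eq_toReal_maxSelfOverlap hvol]
  simpa [ENNReal.toReal_mul, ENNReal.toReal_pow] using
    ENNReal.toReal_mono hbound_ne_top (pow_mul_iSup_lconvPow_two_pow_le hconv hKm N)

/-- **Remark 3.2**: `‖f_{S_N}‖_∞^{1/(2^N - 1)} ≤ 2^n Δ_KB(K)`. -/
theorem sup_density_average_le_pow_deltaKB (n : ℕ) (K : Set (E n)) (hK : IsConvexBody K)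
    (hvol : volume K = 1) (N : ℕ) (hN : 1 ≤ N) :
    (2 : ℝ) ^ (n * N) *
        (⨆ x : E n, convPow (Set.indicator K (fun _ => (1 : ℝ))) (2 ^ N) x) ≤
      ((2 : ℝ) ^ n * deltaKB K) ^ (2 ^ N - 1) :=
  sup_density_average_le_pow_deltaKB_general n K hK hvol N
end
end

section
/- There exist an absolute constant c > 0 and n₀ ∈ ℕ with the following property: for every n ≥ n₀, every b₂ > 0, and every centered convex body K ⊂ ℝⁿ of volume 1 such that ℙ_{S^{n−1}}({θ ∈ S^{n−1} : ‖⟨·,θ⟩‖_{ψ₂(ℙ_K)} ≤ b₂}) ≥ exp(−1/√n), setting m = ⌊n^{3/2}/2⌋, there exist θ₁, …, θ_m ∈ S^{n−1} satisfying simultaneously: (i) ‖⟨·,θᵢ⟩‖_{ψ₂(ℙ_K)} ≤ b₂ for all 1 ≤ i ≤ m, and (ii) |absconv{θ₁, …, θ_m}|^{1/n} ≥ c √(log √n) / n. -/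
open MeasureTheory Metric Set
open scoped ENNReal Pointwise RealInnerProductSpace

noncomputable section

/-- The absolute convex hull `absconv{θ₁, …, θ_m} = {∑ aᵢ θᵢ : ∑ |aᵢ| ≤ 1}`. -/
def absconv {n m : ℕ} (θ : Fin m → E n) : Set (E n) :=
  {x | ∃ a : Fin m → ℝ, (∑ i, |a i|) ≤ 1 ∧ x = ∑ i, a i • θ i}

/-!
Pick the directions greedily among the good ones `G`. With `s = √(log n) / (4√n)`, each unit `v`
lies in the band `{θ : s ≤ |⟪θ, v⟫|}` with probability `p ≳ n^{-1/4}` (see `capBound`). As `G`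
misses at most `p / 4` of the sphere, averaging over `G` (Fubini) finds a `θ ∈ G` whose band
contains a fraction `p / 2` of the directions not yet covered. After `m ≍ n^{3/2}` steps the
uncovered set has measure `(1 - p/2)^m < (s/8)^n`, less than any cap of radius `s / 2`, so every
unit `u` has `|⟪θᵢ, u⟫| ≥ s / 2` for some `i`. By Hahn–Banach `absconv θ` then contains the ball
of radius `s / 2`, whose inscribed cube has volume `(s / √n)ⁿ`, and `s / √n = √(log n) / (4n)`.
-/

open Real Filter Topology

section SphereProb

variable {n : ℕ}

lemma sphereProb_eq_div (A : Set (sphere (0 : E n) 1)) :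
    sphereProb n A =
      (volume : Measure (E n)).toSphere A / (volume : Measure (E n)).toSphere univ := by
  rw [sphereProb, Measure.smul_apply, smul_eq_mul, ENNReal.div_eq_inv_mul]

lemma toSphere_univ_ne_zero [NeZero n] : (volume : Measure (E n)).toSphere univ ≠ 0 :=
  Measure.measure_univ_ne_zero.mpr (Measure.toSphere_ne_zero _)

instance [NeZero n] : IsProbabilityMeasure (sphereProb n) :=
  ⟨by rw [sphereProb_eq_div, ENNReal.div_self toSphere_univ_ne_zero (measure_ne_top _ _)]⟩

lemma le_sphereProb_iff [NeZero n] {q : ℝ≥0∞} {A : Set (sphere (0 : E n) 1)} :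
    q ≤ sphereProb n A ↔
      q * (n * volume (ball (0 : E n) 1)) ≤ (volume : Measure (E n)).toSphere A := by
  rw [sphereProb_eq_div, ENNReal.le_div_iff_mul_le (Or.inl toSphere_univ_ne_zero)
    (Or.inl (measure_ne_top _ _)), Measure.toSphere_apply_univ, finrank_euclideanSpace_fin]

lemma le_sphereProb_of_subset_cone [NeZero n] {P S : Set (E n)} (hP : MeasurableSet P)
    (hS : ∀ x ∈ S, 0 < ‖x‖ ∧ ‖x‖ < 1 ∧ ‖x‖⁻¹ • x ∈ P) {q : ℝ≥0∞}
    (hq : q * volume (ball (0 : E n) 1) ≤ volume S) :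
    q ≤ sphereProb n (Subtype.val ⁻¹' P) := by
  rw [le_sphereProb_iff, Measure.toSphere_apply' _ (measurable_subtype_coe hP),
    finrank_euclideanSpace_fin, mul_left_comm]
  gcongr
  refine hq.trans (measure_mono fun x hx => ?_)
  obtain ⟨hx0, hx1, hxP⟩ := hS x hx
  have hx : ‖x‖⁻¹ • x ∈ sphere (0 : E n) 1 := by
    rw [mem_sphere_zero_iff_norm, norm_smul, norm_inv, norm_norm, inv_mul_cancel₀ hx0.ne']
  exact Set.mem_smul.mpr ⟨‖x‖, ⟨hx0, hx1⟩, _, ⟨⟨_, hx⟩, hxP, rfl⟩,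
    by rw [smul_smul, mul_inv_cancel₀ hx0.ne', one_smul]⟩

lemma ofReal_pow_le_sphereProb_ball [NeZero n] {ε : ℝ} (hε : 0 < ε) (hε2 : ε ≤ 2)
    (x : sphere (0 : E n) 1) :
    ENNReal.ofReal ((ε / 4) ^ n) ≤ sphereProb n (ball x ε) := by
  rw [le_sphereProb_iff]
  convert (volume : Measure (E n)).toSphereBallBound_mul_measure_unitBall_le_toSphere_ball hε x
    using 1
  unfold Measure.toSphereBallBound
  rw [finrank_euclideanSpace_fin, if_pos ⟨NeZero.ne n, hε⟩,
    min_eq_left (Real.toNNReal_le_iff_le_coe.mpr (by simpa using hε2)),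
    ENNReal.ofReal_pow (by positivity), ENNReal.ofReal_div_of_pos (by norm_num)]
  push_cast
  rw [ENNReal.ofReal_ofNat, ENNReal.ofReal]
  ring

end SphereProb

section Cap

lemma sqrt_mul_Gamma_add_half_le {y : ℝ} (hy : 0 < y) :
    √y * Gamma (y + 1 / 2) ≤ Gamma (y + 1) := by
  have hlogconvex := Gamma_mul_add_mul_le_rpow_Gamma_mul_rpow_Gamma hy (by linarith : 0 < y + 1)
    one_half_pos one_half_pos (add_halves 1)
  rw [show 1 / 2 * y + 1 / 2 * (y + 1) = y + 1 / 2 by ring, ← sqrt_eq_rpow, ← sqrt_eq_rpow,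
    ← sqrt_mul (Gamma_pos_of_pos hy).le] at hlogconvex
  calc √y * Gamma (y + 1 / 2) ≤ √y * √(Gamma y * Gamma (y + 1)) := by gcongr
    _ = √(Gamma (y + 1) ^ 2) := by
      rw [← sqrt_mul hy.le, Gamma_add_one hy.ne']
      ring_nf
    _ = Gamma (y + 1) := sqrt_sq (Gamma_pos_of_pos (by linarith)).le

lemma ofReal_sqrt_mul_volume_ball_succ_le (N : ℕ) [NeZero N] :
    ENNReal.ofReal √((N + 1) / 2) * volume (ball (0 : E (N + 1)) 1) ≤
      ENNReal.ofReal √π * volume (ball (0 : E N) 1) := by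
  simp only [EuclideanSpace.volume_ball, Fintype.card_fin, ENNReal.ofReal_one, one_pow, one_mul]
  rw [← ENNReal.ofReal_mul (sqrt_nonneg _), ← ENNReal.ofReal_mul (sqrt_nonneg _)]
  gcongr ENNReal.ofReal ?_
  have hΓ := sqrt_mul_Gamma_add_half_le (y := (N + 1) / 2) (by positivity)
  rw [show ((N + 1) / 2 + 1 / 2 : ℝ) = N / 2 + 1 by ring] at hΓ
  have hΓN : 0 < Gamma (N / 2 + 1) := Gamma_pos_of_pos (by positivity)
  have hΓN1 : 0 < Gamma ((N + 1) / 2 + 1) := Gamma_pos_of_pos (by positivity)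
  push_cast
  rw [mul_div_assoc', mul_div_assoc', div_le_div_iff₀ hΓN1 hΓN, pow_succ]
  calc √((N + 1) / 2) * (√π ^ N * √π) * Gamma (N / 2 + 1)
      = √π * √π ^ N * (√((N + 1) / 2) * Gamma (N / 2 + 1)) := by ring
    _ ≤ √π * √π ^ N * Gamma ((N + 1) / 2 + 1) := by gcongr
    _ = _ := by ring

lemma volume_cylinder (N : ℕ) (a b : ℝ) {ρ : ℝ} (hρ : 0 ≤ ρ) :
    volume {y : E (N + 1) | y 0 ∈ Ioo a b ∧ ∑ i : Fin N, y i.succ ^ 2 < ρ ^ 2} =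
      ENNReal.ofReal (b - a) * volume (ball (0 : E N) ρ) := by
  have hball : MeasurableSet (WithLp.toLp 2 ⁻¹' ball (0 : E N) ρ) :=
    measurableSet_ball.preimage (PiLp.volume_preserving_toLp _).measurable
  have hcyl : {y : E (N + 1) | y 0 ∈ Ioo a b ∧ ∑ i : Fin N, y i.succ ^ 2 < ρ ^ 2} =
      WithLp.ofLp ⁻¹' (MeasurableEquiv.piFinSuccAbove (fun _ => ℝ) 0 ⁻¹'
        (Ioo a b ×ˢ (WithLp.toLp 2 ⁻¹' ball (0 : E N) ρ))) := by
    ext y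
    simp only [mem_ofPred_eq, mem_preimage, MeasurableEquiv.piFinSuccAbove_apply, mem_prod,
      mem_ball_zero_iff, EuclideanSpace.norm_eq]
    rw [sqrt_lt (by positivity) hρ]
    simp [Fin.tail]
  rw [hcyl, (PiLp.volume_preserving_ofLp _).measure_preimage
      ((measurableSet_Ioo.prod hball).preimage (MeasurableEquiv.measurable _)).nullMeasurableSet,
    (volume_preserving_piFinSuccAbove (fun _ => ℝ) 0).measure_preimage
      (measurableSet_Ioo.prod hball).nullMeasurableSet,
    Measure.volume_eq_prod, Measure.prod_prod, Real.volume_Ioo,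
    (PiLp.volume_preserving_toLp _).measure_preimage measurableSet_ball.nullMeasurableSet]

lemma exists_orthonormalBasis_apply_zero_eq {N : ℕ} {u : E (N + 1)} (hu : ‖u‖ = 1) :
    ∃ b : OrthonormalBasis (Fin (N + 1)) ℝ (E (N + 1)), b 0 = u := by
  obtain ⟨b, hb⟩ := Orthonormal.exists_orthonormalBasis_extension_of_card_eq (𝕜 := ℝ)
    (v := fun _ => u) (s := ({0} : Set (Fin (N + 1)))) (by simp)
    (orthonormal_subsingleton_iff.mpr fun _ => hu)
  exact ⟨b, hb 0 rfl⟩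

lemma mem_cone_of_repr_mem_cylinder {N : ℕ} {s : ℝ}
    {b : OrthonormalBasis (Fin (N + 1)) ℝ (E (N + 1))} {x : E (N + 1)}
    (hx0 : b.repr x 0 ∈ Ioo s (2 * s)) (hx : ∑ i : Fin N, b.repr x i.succ ^ 2 < 1 - 4 * s ^ 2) :
    0 < ‖x‖ ∧ ‖x‖ < 1 ∧ s ≤ ⟪b 0, ‖x‖⁻¹ • x⟫ := by
  have hb0 : b.repr x 0 = ⟪b 0, x⟫ := b.repr_apply_apply x 0
  have hnorm : ‖x‖ ^ 2 = b.repr x 0 ^ 2 + ∑ i : Fin N, b.repr x i.succ ^ 2 := by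
    rw [← b.repr.norm_map, EuclideanSpace.norm_sq_eq, Fin.sum_univ_succ]
    simp [sq_abs]
  obtain ⟨hsx, hx2s⟩ := hx0
  have hx1 : ‖x‖ < 1 := by nlinarith [norm_nonneg x]
  have hxpos : 0 < ‖x‖ := by
    have := real_inner_le_norm (b 0) x
    rw [b.orthonormal.1 0, one_mul] at this
    linarith
  refine ⟨hxpos, hx1, ?_⟩
  rw [real_inner_smul_right, ← hb0]
  exact hsx.le.trans (le_mul_of_one_le_left (by linarith)
    (one_le_inv_iff₀.mpr ⟨hxpos, hx1.le⟩))

/-- Lower bound for the measure of the cap `{θ : s ≤ ⟪u, θ⟫}` of `S^{n-1}`: the cylinder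
`{x : s < ⟪u, x⟫ < 2s, ‖x - ⟪u, x⟫ u‖ < √(1 - 4s²)}` lies in the cone over the cap, and
`|Bⁿ⁻¹| / |Bⁿ| ≥ √(n / 2π)`. -/
def capBound (n : ℕ) (s : ℝ) : ℝ := s * √(1 - 4 * s ^ 2) ^ (n - 1) * √(n / 2) / √π

theorem ofReal_capBound_le_sphereProb {N : ℕ} [NeZero N] {s : ℝ} (hs : 0 < s)
    (hs1 : 4 * s ^ 2 < 1) (u : sphere (0 : E (N + 1)) 1) :
    ENNReal.ofReal (capBound (N + 1) s) ≤
      sphereProb (N + 1) {θ | s ≤ ⟪(u : E (N + 1)), θ⟫} := by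
  set ρ := √(1 - 4 * s ^ 2)
  have hρ : ρ ^ 2 = 1 - 4 * s ^ 2 := sq_sqrt (by linarith)
  obtain ⟨b, hb⟩ := exists_orthonormalBasis_apply_zero_eq (norm_eq_of_mem_sphere u)
  set C := {y : E (N + 1) | y 0 ∈ Ioo s (2 * s) ∧ ∑ i : Fin N, y i.succ ^ 2 < ρ ^ 2}
  have hC : IsOpen C :=
    (isOpen_Ioo.preimage (f := fun y : E (N + 1) => y 0) (by fun_prop)).inter
      (isOpen_lt (f := fun y : E (N + 1) => ∑ i : Fin N, y i.succ ^ 2) (by fun_prop)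
        continuous_const)
  refine le_sphereProb_of_subset_cone (P := {x | s ≤ ⟪(u : E (N + 1)), x⟫}) (S := b.repr ⁻¹' C)
    (measurableSet_le measurable_const (measurable_const.inner measurable_id)) ?_ ?_
  · rintro x ⟨hx0, hxρ⟩
    exact hb ▸ mem_cone_of_repr_mem_cylinder hx0 (hρ ▸ hxρ)
  · rw [b.measurePreserving_repr.measure_preimage hC.measurableSet.nullMeasurableSet,
      volume_cylinder _ _ _ (sqrt_nonneg _), Measure.addHaar_ball _ _ (sqrt_nonneg _),
      finrank_euclideanSpace_fin]
    calc ENNReal.ofReal (capBound (N + 1) s) * volume (ball (0 : E (N + 1)) 1)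
        = ENNReal.ofReal (s * ρ ^ N / √π) *
            (ENNReal.ofReal √((N + 1) / 2) * volume (ball (0 : E (N + 1)) 1)) := by
          rw [← mul_assoc, ← ENNReal.ofReal_mul (by positivity)]
          congr 2
          simp only [capBound, Nat.add_sub_cancel, ρ]
          push_cast
          ring
      _ ≤ ENNReal.ofReal (s * ρ ^ N / √π) * (ENNReal.ofReal √π * volume (ball (0 : E N) 1)) :=
          mul_le_mul_right (ofReal_sqrt_mul_volume_ball_succ_le N) _
      _ = ENNReal.ofReal (2 * s - s) * (ENNReal.ofReal (ρ ^ N) * volume (ball (0 : E N) 1)) := by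
          rw [← mul_assoc, ← mul_assoc, ← ENNReal.ofReal_mul (by positivity),
            ← ENNReal.ofReal_mul (by linarith)]
          congr 2
          field_simp
          ring

end Cap

section Greedy

variable {X : Type*} {R : Set (X × X)} {U : Set X}

lemma prodMk_preimage_inter_univ_prod (θ : X) :
    Prod.mk θ ⁻¹' (R ∩ univ ×ˢ U) = U ∩ Prod.mk θ ⁻¹' R := by
  ext v
  simp [and_comm]

variable [MeasurableSpace X] {μ : Measure X}

lemma measurable_measure_inter_prodMk_preimage [SFinite μ] (hR : MeasurableSet R)
    (hU : MeasurableSet U) : Measurable fun θ => μ (U ∩ Prod.mk θ ⁻¹' R) := by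
  simpa only [prodMk_preimage_inter_univ_prod] using
    measurable_measure_prodMk_left (ν := μ) (hR.inter (MeasurableSet.univ.prod hU))

lemma lintegral_measure_inter_prodMk_preimage [SFinite μ] (hR : MeasurableSet R)
    (hU : MeasurableSet U) :
    ∫⁻ θ, μ (U ∩ Prod.mk θ ⁻¹' R) ∂μ = ∫⁻ v in U, μ {θ | (θ, v) ∈ R} ∂μ := by
  have hR' := hR.inter (MeasurableSet.univ.prod hU)
  simp_rw [← prodMk_preimage_inter_univ_prod, ← Measure.prod_apply hR',
    Measure.prod_apply_symm hR', ← lintegral_indicator hU]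
  congr 1 with v
  by_cases hv : v ∈ U <;> simp [hv, preimage]

lemma lintegral_le_add_mul_of_measure_compl_le [IsProbabilityMeasure μ] {f : X → ℝ≥0∞}
    {H : Set X} {a b c : ℝ≥0∞} (hH : MeasurableSet H) (hfH : ∀ x ∈ H, f x ≤ a)
    (hf : ∀ x, f x ≤ b) (hHc : μ Hᶜ ≤ c) : ∫⁻ x, f x ∂μ ≤ a + b * c := by
  rw [← lintegral_add_compl f hH]
  gcongr
  · calc ∫⁻ x in H, f x ∂μ ≤ ∫⁻ _ in H, a ∂μ := setLIntegral_mono measurable_const hfH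
      _ ≤ a := by
        rw [setLIntegral_const]
        exact mul_le_of_le_one_right' prob_le_one
  · calc ∫⁻ x in Hᶜ, f x ∂μ ≤ ∫⁻ _ in Hᶜ, b ∂μ :=
        setLIntegral_mono measurable_const fun x _ => hf x
      _ ≤ b * c := by
        rw [setLIntegral_const]
        gcongr

lemma exists_mem_two_mul_le_measure_inter [IsProbabilityMeasure μ] {q : ℝ≥0∞} {G : Set X}
    (hR : MeasurableSet R) (hq : ∀ v, 4 * q ≤ μ {θ | (θ, v) ∈ R}) (hG : 1 - q ≤ μ G)
    (hU : MeasurableSet U) :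
    ∃ θ ∈ G, 2 * q * μ U ≤ μ (U ∩ Prod.mk θ ⁻¹' R) := by
  have hq1 : q < 1 := by
    obtain ⟨v⟩ := nonempty_of_isProbabilityMeasure μ
    refine lt_of_not_ge fun h => ?_
    have h4 : 4 * 1 ≤ 4 * q := by gcongr
    have := h4.trans ((hq v).trans prob_le_one)
    norm_num at this
  obtain ⟨θ₀, hθ₀⟩ : G.Nonempty :=
    nonempty_of_measure_ne_zero ((tsub_pos_of_lt hq1).trans_le hG).ne'
  by_contra! hcon
  set f := fun θ => μ (U ∩ Prod.mk θ ⁻¹' R)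
  set H := {θ | f θ < 2 * q * μ U}
  have hH : MeasurableSet H :=
    measurableSet_lt (measurable_measure_inter_prodMk_preimage hR hU) measurable_const
  have hHc : μ Hᶜ ≤ q := by
    rw [prob_compl_eq_one_sub hH]
    calc 1 - μ H ≤ 1 - (1 - q) := tsub_le_tsub_left (hG.trans (measure_mono hcon)) 1
      _ = q := ENNReal.sub_sub_cancel ENNReal.one_ne_top hq1.le
  have hlower : 4 * q * μ U ≤ ∫⁻ θ, f θ ∂μ := by
    rw [lintegral_measure_inter_prodMk_preimage hR hU, ← setLIntegral_const]
    exact setLIntegral_mono (measurable_measure_prodMk_right hR) fun v _ => hq v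
  have hupper : ∫⁻ θ, f θ ∂μ ≤ 2 * q * μ U + μ U * q :=
    lintegral_le_add_mul_of_measure_compl_le hH (fun θ hθ => (hθ : f θ < _).le)
      (fun θ => measure_mono inter_subset_left) hHc
  have hx0 : q * μ U ≠ 0 :=
    right_ne_zero_of_mul ((mul_assoc 2 q (μ U)) ▸ (pos_of_gt (hcon θ₀ hθ₀)).ne')
  have hxtop : q * μ U ≠ ⊤ :=
    ENNReal.mul_ne_top (hq1.trans ENNReal.one_lt_top).ne (measure_ne_top _ _)
  have h43 : 4 * (q * μ U) ≤ 3 * (q * μ U) := by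
    calc 4 * (q * μ U) = 4 * q * μ U := (mul_assoc _ _ _).symm
      _ ≤ 2 * q * μ U + μ U * q := hlower.trans hupper
      _ = 3 * (q * μ U) := by ring
  have := (ENNReal.mul_le_mul_iff_left hx0 hxtop).mp h43
  norm_num at this

theorem exists_forall_mem_measure_uncovered_le [IsProbabilityMeasure μ] {q : ℝ≥0∞}
    {G : Set X} (hR : MeasurableSet R)
    (hq : ∀ v, 4 * q ≤ μ {θ | (θ, v) ∈ R}) (hG : 1 - q ≤ μ G) (k : ℕ) :
    ∃ θ : Fin k → X, (∀ i, θ i ∈ G) ∧ μ {v | ∀ i, (θ i, v) ∉ R} ≤ (1 - 2 * q) ^ k := by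
  induction k with
  | zero => exact ⟨Fin.elim0, Fin.rec0, by simp⟩
  | succ k ih =>
    obtain ⟨θ, hθG, hθ⟩ := ih
    set U := {v | ∀ i, (θ i, v) ∉ R}
    have hU : MeasurableSet U := by
      simp only [U, ofPred_forall]
      exact MeasurableSet.iInter fun i => (measurable_prodMk_left hR).compl
    obtain ⟨θ₀, hθ₀G, hθ₀⟩ := exists_mem_two_mul_le_measure_inter hR hq hG hU
    refine ⟨Fin.cons θ₀ θ, Fin.cases hθ₀G hθG, ?_⟩
    have hsucc : {v | ∀ i, ((Fin.cons θ₀ θ : Fin (k + 1) → X) i, v) ∉ R} =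
        U \ (U ∩ Prod.mk θ₀ ⁻¹' R) := by
      ext v
      simp [U, Fin.forall_fin_succ, and_comm]
    rw [hsucc, measure_sdiff inter_subset_left
      (hU.inter (measurable_prodMk_left hR)).nullMeasurableSet (measure_ne_top _ _)]
    calc μ U - μ (U ∩ Prod.mk θ₀ ⁻¹' R) ≤ μ U - 2 * q * μ U := tsub_le_tsub_left hθ₀ _
      _ = (1 - 2 * q) * μ U := by rw [ENNReal.sub_mul fun _ _ => measure_ne_top _ _, one_mul]
      _ ≤ (1 - 2 * q) ^ (k + 1) := by
        rw [pow_succ']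
        gcongr

end Greedy

section SphereCover

lemma one_sub_ofReal_le_ofReal_exp {x : ℝ} (hx : 0 ≤ x) :
    1 - ENNReal.ofReal x ≤ ENNReal.ofReal (exp (-x)) := by
  rw [← ENNReal.ofReal_one, ← ENNReal.ofReal_sub _ hx]
  exact ENNReal.ofReal_le_ofReal (by linarith [add_one_le_exp (-x)])

lemma one_sub_ofReal_pow_le_ofReal_exp {x : ℝ} (hx : 0 ≤ x) (k : ℕ) :
    (1 - ENNReal.ofReal x) ^ k ≤ ENNReal.ofReal (exp (-(x * k))) := by
  calc (1 - ENNReal.ofReal x) ^ k ≤ ENNReal.ofReal (exp (-x)) ^ k := by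
        gcongr
        exact one_sub_ofReal_le_ofReal_exp hx
    _ = ENNReal.ofReal (exp (-(x * k))) := by
        rw [← ENNReal.ofReal_pow (exp_pos _).le, ← exp_nat_mul]
        ring_nf

theorem exists_forall_mem_sphereProb_uncovered_le {n : ℕ} (hn : 2 ≤ n) {s : ℝ} (hs0 : 0 < s)
    (hs1 : s < 1 / 2) {G : Set (sphere (0 : E n) 1)}
    (hG : 1 - ENNReal.ofReal (capBound n s / 4) ≤ sphereProb n G) (k : ℕ) :
    ∃ θ : Fin k → sphere (0 : E n) 1, (∀ i, θ i ∈ G) ∧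
      sphereProb n {v | ∀ i, |⟪(θ i : E n), v⟫| < s} ≤
        ENNReal.ofReal (exp (-(capBound n s / 2 * k))) := by
  obtain ⟨N, rfl⟩ : ∃ N, n = N + 1 := ⟨n - 1, by omega⟩
  have : NeZero N := ⟨by omega⟩
  set c := capBound (N + 1) s
  set R := {q : sphere (0 : E (N + 1)) 1 × sphere (0 : E (N + 1)) 1 |
    s ≤ |⟪(q.1 : E (N + 1)), q.2⟫|}
  have hR : MeasurableSet R := measurableSet_le measurable_const (by fun_prop)
  have hband : ∀ v, 4 * ENNReal.ofReal (c / 4) ≤ sphereProb (N + 1) {θ | (θ, v) ∈ R} := by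
    intro v
    rw [← ENNReal.ofReal_ofNat, ← ENNReal.ofReal_mul (by norm_num),
      mul_div_cancel₀ _ four_ne_zero]
    refine (ofReal_capBound_le_sphereProb hs0 (by nlinarith) v).trans
      (measure_mono fun θ hθ => ?_)
    show s ≤ |⟪(θ : E (N + 1)), v⟫|
    rw [real_inner_comm]
    exact (hθ : s ≤ _).trans (le_abs_self _)
  obtain ⟨θ, hθG, hθ⟩ := exists_forall_mem_measure_uncovered_le hR hband hG k
  have htwo : 2 * ENNReal.ofReal (c / 4) = ENNReal.ofReal (c / 2) := by
    rw [← ENNReal.ofReal_ofNat, ← ENNReal.ofReal_mul (by norm_num)]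
    ring_nf
  refine ⟨θ, hθG, ?_⟩
  calc sphereProb (N + 1) {v | ∀ i, |⟪(θ i : E (N + 1)), v⟫| < s}
      = sphereProb (N + 1) {v | ∀ i, (θ i, v) ∉ R} := by simp [R]
    _ ≤ (1 - ENNReal.ofReal (c / 2)) ^ k := htwo ▸ hθ
    _ ≤ ENNReal.ofReal (exp (-(c / 2 * k))) :=
      one_sub_ofReal_pow_le_ofReal_exp (by unfold c capBound; positivity) _

theorem exists_le_abs_inner_of_sphereProb_lt {n m : ℕ} [NeZero n] {s : ℝ} (hs : 0 < s)
    (hs4 : s ≤ 4) (θ : Fin m → sphere (0 : E n) 1)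
    (h : sphereProb n {v | ∀ i, |⟪(θ i : E n), v⟫| < s} < ENNReal.ofReal ((s / 8) ^ n))
    (u : E n) (hu : ‖u‖ = 1) : ∃ i, s / 2 ≤ |⟪(θ i : E n), u⟫| := by
  by_contra! hcon
  have hball : ball (⟨u, mem_sphere_zero_iff_norm.mpr hu⟩ : sphere (0 : E n) 1) (s / 2) ⊆
      {v | ∀ i, |⟪(θ i : E n), v⟫| < s} := by
    intro v hv i
    have hvu : |⟪(θ i : E n), (v : E n) - u⟫| < s / 2 := by
      refine (abs_real_inner_le_norm _ _).trans_lt ?_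
      rw [norm_eq_of_mem_sphere, one_mul, ← dist_eq_norm]
      exact hv
    calc |⟪(θ i : E n), v⟫| = |⟪(θ i : E n), u⟫ + ⟪(θ i : E n), (v : E n) - u⟫| := by
          rw [inner_sub_right, add_sub_cancel]
      _ ≤ |⟪(θ i : E n), u⟫| + |⟪(θ i : E n), (v : E n) - u⟫| := abs_add_le _ _
      _ < s / 2 + s / 2 := add_lt_add (hcon i) hvu
      _ = s := add_halves s
  have := (ofReal_pow_le_sphereProb_ball (ε := s / 2) (by linarith) (by linarith) _).trans_lt
    ((measure_mono hball).trans_lt h)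
  rw [div_div, show (2 : ℝ) * 4 = 8 by norm_num] at this
  exact this.false

end SphereCover

section Absconv

variable {n m : ℕ}

lemma convex_setOf_sum_abs_le {ι : Type*} [Fintype ι] (r : ℝ) :
    Convex ℝ {a : ι → ℝ | ∑ i, |a i| ≤ r} := by
  intro a ha b hb s t hs ht hst
  calc ∑ i, |s * a i + t * b i| ≤ ∑ i, (s * |a i| + t * |b i|) :=
        Finset.sum_le_sum fun i _ => (abs_add_le _ _).trans_eq
          (by rw [abs_mul, abs_mul, abs_of_nonneg hs, abs_of_nonneg ht])
    _ = s * ∑ i, |a i| + t * ∑ i, |b i| := by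
        rw [Finset.sum_add_distrib, Finset.mul_sum, Finset.mul_sum]
    _ ≤ s * r + t * r := by gcongr <;> assumption
    _ = r := by rw [← add_mul, hst, one_mul]

lemma isCompact_setOf_sum_abs_le {ι : Type*} [Fintype ι] (r : ℝ) :
    IsCompact {a : ι → ℝ | ∑ i, |a i| ≤ r} := by
  refine Metric.isCompact_of_isClosed_isBounded
    (isClosed_le (by fun_prop) continuous_const)
    ((isBounded_closedBall (x := 0) (r := r)).subset ?_)
  intro a ha
  rw [mem_closedBall_zero_iff,
    pi_norm_le_iff_of_nonneg ((Finset.sum_nonneg fun i _ => abs_nonneg (a i)).trans ha)]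
  exact fun i => (Finset.single_le_sum (fun j _ => abs_nonneg (a j)) (Finset.mem_univ i)).trans ha

lemma absconv_eq_image (θ : Fin m → E n) :
    absconv θ = Fintype.linearCombination ℝ θ '' {a | ∑ i, |a i| ≤ 1} := by
  ext x
  simp [absconv, Fintype.linearCombination_apply, eq_comm]

lemma convex_absconv (θ : Fin m → E n) : Convex ℝ (absconv θ) :=
  absconv_eq_image θ ▸ (convex_setOf_sum_abs_le 1).linear_image _

lemma isCompact_absconv (θ : Fin m → E n) : IsCompact (absconv θ) :=
  absconv_eq_image θ ▸
    (isCompact_setOf_sum_abs_le 1).image (LinearMap.continuous_of_finiteDimensional _)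

lemma zero_mem_absconv (θ : Fin m → E n) : 0 ∈ absconv θ :=
  ⟨0, by simp, by simp⟩

lemma smul_mem_absconv (θ : Fin m → E n) (i : Fin m) {ε : ℝ} (hε : |ε| ≤ 1) :
    ε • θ i ∈ absconv θ :=
  ⟨Pi.single i ε, by simpa [Pi.single_apply, apply_ite abs] using hε,
    by simp [Pi.single_apply, ite_smul]⟩

theorem closedBall_subset_absconv (θ : Fin m → E n) {r : ℝ}
    (h : ∀ u : E n, ‖u‖ = 1 → ∃ i, r ≤ |⟪θ i, u⟫|) : closedBall 0 r ⊆ absconv θ := by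
  intro x hx
  by_contra hxA
  obtain ⟨f, β, hfA, hfx⟩ :=
    geometric_hahn_banach_closed_point (convex_absconv θ) (isCompact_absconv θ).isClosed hxA
  set w := (InnerProductSpace.toDual ℝ (E n)).symm f
  have hw : ∀ y, ⟪w, y⟫ = f y := fun y => InnerProductSpace.toDual_symm_apply
  have hβ : 0 < β := by simpa using hfA 0 (zero_mem_absconv θ)
  have hw0 : w ≠ 0 := by
    rintro hw0
    have := hw x
    rw [hw0, inner_zero_left] at this
    linarith
  obtain ⟨i, hi⟩ := h (‖w‖⁻¹ • w) (norm_smul_inv_norm hw0)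
  have hfi : |f (θ i)| < β := by
    have hneg := hfA _ (smul_mem_absconv θ i (ε := -1) (by simp))
    have hpos := hfA _ (smul_mem_absconv θ i (ε := 1) (by simp))
    simp only [neg_smul, one_smul, map_neg] at hneg hpos
    exact abs_lt.mpr ⟨by linarith, hpos⟩
  have hfx_le : f x ≤ |f (θ i)| := calc
    f x = ⟪w, x⟫ := (hw x).symm
    _ ≤ ‖w‖ * ‖x‖ := real_inner_le_norm w x
    _ ≤ ‖w‖ * r := by gcongr; exact mem_closedBall_zero_iff.mp hx
    _ ≤ ‖w‖ * |⟪θ i, ‖w‖⁻¹ • w⟫| := by gcongr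
    _ = |f (θ i)| := by
      rw [real_inner_smul_right, abs_mul, abs_inv, abs_norm,
        mul_inv_cancel_left₀ (norm_ne_zero_iff.mpr hw0), real_inner_comm, hw]
  linarith

lemma ofReal_pow_le_volume_closedBall [NeZero n] {r : ℝ} (hr : 0 ≤ r) :
    ENNReal.ofReal ((2 * r / √n) ^ n) ≤ volume (closedBall (0 : E n) r) := by
  set a := r / √n
  set Q : Set (Fin n → ℝ) := univ.pi fun _ => Icc (-a) a
  have hQ : WithLp.ofLp ⁻¹' Q ⊆ closedBall (0 : E n) r := by
    intro x hx
    simp only [Q, mem_preimage, mem_univ_pi, mem_Icc, ← abs_le] at hx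
    rw [mem_closedBall_zero_iff, EuclideanSpace.norm_eq]
    calc √(∑ i, ‖x i‖ ^ 2) ≤ √(∑ _i : Fin n, a ^ 2) := by
          gcongr with i
          exact (Real.norm_eq_abs _).trans_le (hx i)
      _ = r := by
          rw [Finset.sum_const, Finset.card_univ, Fintype.card_fin, nsmul_eq_mul, div_pow,
            sq_sqrt n.cast_nonneg, mul_div_cancel₀ _ (NeZero.ne (n : ℝ)), sqrt_sq hr]
  calc ENNReal.ofReal ((2 * r / √n) ^ n) = volume (WithLp.ofLp ⁻¹' Q) := by
        rw [(PiLp.volume_preserving_ofLp _).measure_preimage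
          (MeasurableSet.univ_pi fun _ => measurableSet_Icc).nullMeasurableSet, volume_pi_pi]
        have ha : 0 ≤ a := div_nonneg hr (sqrt_nonneg _)
        simp only [Real.volume_Icc, Finset.prod_const, Finset.card_univ, Fintype.card_fin,
          ← ENNReal.ofReal_pow (by linarith : 0 ≤ a - -a)]
        congr 2
        ring
    _ ≤ volume (closedBall (0 : E n) r) := measure_mono hQ

theorem le_volume_absconv_rpow [NeZero n] (θ : Fin m → E n) {r : ℝ} (hr : 0 ≤ r)
    (h : ∀ u : E n, ‖u‖ = 1 → ∃ i, r ≤ |⟪θ i, u⟫|) :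
    2 * r / √n ≤ (volume (absconv θ)).toReal ^ (1 / (n : ℝ)) := by
  have hvol : (2 * r / √n) ^ n ≤ (volume (absconv θ)).toReal :=
    (ENNReal.ofReal_le_iff_le_toReal (isCompact_absconv θ).measure_lt_top.ne).mp
      ((ofReal_pow_le_volume_closedBall hr).trans (measure_mono (closedBall_subset_absconv θ h)))
  calc 2 * r / √n = ((2 * r / √n) ^ n) ^ (1 / (n : ℝ)) := by
        rw [one_div, pow_rpow_inv_natCast (by positivity) (NeZero.ne n)]
    _ ≤ (volume (absconv θ)).toReal ^ (1 / (n : ℝ)) := by gcongr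

end Absconv

section Asymptotics

def capHeight (n : ℕ) : ℝ := √(log n) / (4 * √n)

lemma capHeight_pos {n : ℕ} (hn : 2 ≤ n) : 0 < capHeight n := by
  have := log_pos (by exact_mod_cast hn : (1 : ℝ) < n)
  unfold capHeight
  positivity

lemma four_mul_capHeight_sq (n : ℕ) : 4 * capHeight n ^ 2 = log n / (4 * n) := by
  rw [capHeight, div_pow, mul_pow, sq_sqrt (log_natCast_nonneg n), sq_sqrt n.cast_nonneg]
  ring

lemma tendsto_capHeight : Tendsto capHeight atTop (𝓝 0) := by
  have hlog : Tendsto (fun x : ℝ => log x / x) atTop (𝓝 0) :=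
    isLittleO_log_id_atTop.tendsto_div_nhds_zero
  have h := ((continuous_sqrt.tendsto 0).comp (hlog.comp tendsto_natCast_atTop_atTop)).div_const 4
  rw [sqrt_zero, zero_div] at h
  refine h.congr fun n => ?_
  simp only [Function.comp_apply, capHeight, sqrt_div' _ n.cast_nonneg]
  ring

lemma sqrt_log_sqrt_div_le_capHeight_div_sqrt (n : ℕ) :
    1 / 4 * √(log √n) / n ≤ capHeight n / √n := by
  have hlog : 0 ≤ log n := log_natCast_nonneg n
  rw [capHeight, div_div, mul_assoc, mul_self_sqrt n.cast_nonneg, log_sqrt n.cast_nonneg,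
    show 1 / 4 * √(log n / 2) / n = √(log n / 2) / (4 * n) by ring]
  gcongr
  linarith

lemma exp_neg_two_mul_le_one_sub {x : ℝ} (hx0 : 0 ≤ x) (hx : x ≤ 1 / 2) :
    exp (-(2 * x)) ≤ 1 - x := by
  have h1 := add_one_le_exp (2 * x)
  have h2 : exp (-(2 * x)) * exp (2 * x) = 1 := by rw [← exp_add, neg_add_cancel, exp_zero]
  nlinarith [exp_pos (-(2 * x)), mul_nonneg hx0 (by linarith : (0 : ℝ) ≤ 1 - 2 * x)]

lemma exp_neg_mul_le_sqrt_one_sub_pow {x : ℝ} (hx0 : 0 ≤ x) (hx : x ≤ 1 / 2) (k : ℕ) :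
    exp (-(x * k)) ≤ √(1 - x) ^ k := by
  have hexp : exp (-x) ≤ √(1 - x) := by
    rw [le_sqrt' (exp_pos _), sq, ← exp_add, ← neg_add, ← two_mul]
    exact exp_neg_two_mul_le_one_sub hx0 hx
  calc exp (-(x * k)) = exp (-x) ^ k := by rw [← exp_nat_mul]; ring_nf
    _ ≤ √(1 - x) ^ k := by gcongr

lemma eventually_rpow_neg_le_capBound :
    ∀ᶠ n : ℕ in atTop, (n : ℝ) ^ (-(1 / 4 : ℝ)) / 4 ≤ capBound n (capHeight n) := by
  filter_upwards [eventually_ge_atTop 2,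
    (tendsto_log_atTop.comp tendsto_natCast_atTop_atTop).eventually_ge_atTop (2 * π)]
    with n hn hlog
  have hlog : 2 * π ≤ log n := hlog
  have hn0 : (0 : ℝ) < n := by exact_mod_cast (by omega : 0 < n)
  set s := capHeight n
  have hs : s = √(log n) / (4 * √n) := rfl
  have hs2 : 4 * s ^ 2 = log n / (4 * n) := four_mul_capHeight_sq n
  have hx : 4 * s ^ 2 ≤ 1 / 2 := by
    rw [hs2, div_le_iff₀ (by positivity)]
    linarith [log_le_sub_one_of_pos hn0]
  have hfactor : s * √(n / 2) / √π = √(log n) / (4 * √(2 * π)) := by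
    rw [hs, sqrt_div' _ zero_le_two, sqrt_mul zero_le_two]
    field_simp
  have hpow : (n : ℝ) ^ (-(1 / 4 : ℝ)) ≤ √(1 - 4 * s ^ 2) ^ (n - 1) := calc
    (n : ℝ) ^ (-(1 / 4 : ℝ)) = exp (-(4 * s ^ 2 * n)) := by
      rw [rpow_def_of_pos hn0, hs2]
      field_simp
    _ ≤ exp (-(4 * s ^ 2 * (n - 1 : ℕ))) := by
      gcongr
      exact_mod_cast Nat.sub_le n 1
    _ ≤ √(1 - 4 * s ^ 2) ^ (n - 1) := exp_neg_mul_le_sqrt_one_sub_pow (by positivity) hx _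
  have hconst : 1 / 4 ≤ √(log n) / (4 * √(2 * π)) := by
    rw [div_le_div_iff₀ (by norm_num) (by positivity)]
    linarith [sqrt_le_sqrt hlog]
  calc (n : ℝ) ^ (-(1 / 4 : ℝ)) / 4 = 1 / 4 * (n : ℝ) ^ (-(1 / 4 : ℝ)) := by ring
    _ ≤ √(log n) / (4 * √(2 * π)) * √(1 - 4 * s ^ 2) ^ (n - 1) := by gcongr
    _ = capBound n s := by rw [← hfactor, capBound]; ring

lemma eventually_inv_sqrt_le_capBound_div_four :
    ∀ᶠ n : ℕ in atTop, 1 / √n ≤ capBound n (capHeight n) / 4 := by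
  have hsmall := ((tendsto_rpow_neg_atTop (by norm_num : (0 : ℝ) < 1 / 4)).comp
    tendsto_natCast_atTop_atTop).eventually_lt_const (by norm_num : (0 : ℝ) < 1 / 16)
  filter_upwards [eventually_rpow_neg_le_capBound, hsmall, eventually_gt_atTop 0]
    with n hcap hsmall hn
  have hn0 : (0 : ℝ) < n := by exact_mod_cast hn
  set t := (n : ℝ) ^ (-(1 / 4 : ℝ))
  have ht : 1 / √n = t * t := by
    rw [sqrt_eq_rpow, one_div, ← rpow_neg hn0.le, ← rpow_add hn0]
    norm_num
  have ht0 : 0 ≤ t := rpow_nonneg hn0.le _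
  have hsmall : t < 1 / 16 := hsmall
  rw [ht]
  nlinarith

lemma div_four_le_floor_div_two {x : ℝ} (hx : 4 ≤ x) : x / 4 ≤ ⌊x / 2⌋₊ := by
  linarith [Nat.sub_one_lt_floor (x / 2)]

lemma inv_le_capHeight_div_eight {n : ℕ} (hn : 1024 ≤ n) : 1 / (n : ℝ) ≤ capHeight n / 8 := by
  have hn1 : (1024 : ℝ) ≤ n := by exact_mod_cast hn
  have hn0 : (0 : ℝ) < n := by linarith
  have hsqrt : 32 ≤ √n := (le_sqrt' (by norm_num)).mpr (by linarith)
  have hlog : 1 ≤ log n := (le_log_iff_exp_le hn0).mpr (by linarith [exp_one_lt_three])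
  have hsqrtlog : 1 ≤ √(log n) := (le_sqrt' one_pos).mpr (by rwa [one_pow])
  have hmul : capHeight n * n = √(log n) * √n / 4 := by
    rw [capHeight, div_mul_eq_mul_div, mul_comm 4, ← div_div, mul_div_assoc, div_sqrt]
  rw [div_le_div_iff₀ hn0 (by norm_num), hmul]
  nlinarith

lemma eventually_exp_neg_lt_capHeight_pow :
    ∀ᶠ n : ℕ in atTop, exp (-(capBound n (capHeight n) / 2 * ⌊(n : ℝ) ^ (3 / 2 : ℝ) / 2⌋₊)) <
      (capHeight n / 8) ^ n := by
  have hlog := ((isLittleO_log_rpow_atTop (by norm_num : (0 : ℝ) < 1 / 4)).tendsto_div_nhds_zero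
    |>.comp tendsto_natCast_atTop_atTop).eventually_lt_const (by norm_num : (0 : ℝ) < 1 / 32)
  filter_upwards [eventually_rpow_neg_le_capBound, hlog, eventually_ge_atTop 1024]
    with n hcap hlog hn
  have hn1 : (1024 : ℝ) ≤ n := by exact_mod_cast hn
  have hn0 : (0 : ℝ) < n := by linarith
  have hlog : 32 * log n < (n : ℝ) ^ (1 / 4 : ℝ) := by
    have hlog : log n / (n : ℝ) ^ (1 / 4 : ℝ) < 1 / 32 := hlog
    rw [div_lt_iff₀ (rpow_pos_of_pos hn0 _)] at hlog
    linarith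
  have hm : (n : ℝ) ^ (3 / 2 : ℝ) / 4 ≤ ⌊(n : ℝ) ^ (3 / 2 : ℝ) / 2⌋₊ :=
    div_four_le_floor_div_two <| calc
      (4 : ℝ) ≤ (n : ℝ) ^ (1 : ℝ) := by rw [rpow_one]; linarith
      _ ≤ (n : ℝ) ^ (3 / 2 : ℝ) := rpow_le_rpow_of_exponent_le (by linarith) (by norm_num)
  have hc : (n : ℝ) ^ (-(1 / 4 : ℝ)) / 8 ≤ capBound n (capHeight n) / 2 := by linarith
  calc exp (-(capBound n (capHeight n) / 2 * ⌊(n : ℝ) ^ (3 / 2 : ℝ) / 2⌋₊))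
      ≤ exp (-((n : ℝ) ^ (-(1 / 4 : ℝ)) / 8 * ((n : ℝ) ^ (3 / 2 : ℝ) / 4))) :=
        exp_le_exp.mpr (neg_le_neg (mul_le_mul hc hm (by positivity)
          ((by positivity : (0 : ℝ) ≤ (n : ℝ) ^ (-(1 / 4 : ℝ)) / 8).trans hc)))
    _ = exp (-(n * (n : ℝ) ^ (1 / 4 : ℝ) / 32)) := by
        rw [div_mul_div_comm, ← rpow_add hn0, show -(1 / 4 : ℝ) + 3 / 2 = 1 + 1 / 4 by norm_num,
          rpow_add hn0, rpow_one]
        ring_nf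
    _ < exp (-(n * log n)) := by
        rw [exp_lt_exp, neg_lt_neg_iff]
        nlinarith
    _ = (1 / (n : ℝ)) ^ n := by rw [exp_neg, exp_nat_mul, exp_log hn0, one_div, inv_pow]
    _ ≤ (capHeight n / 8) ^ n := pow_le_pow_left₀ (by positivity) (inv_le_capHeight_div_eight hn) n

end Asymptotics

/-- Existence of a good realization `θ₁, …, θ_m` of sub-gaussian directions
spanning a large Gluskin polytope (key step in the proof of Theorem 1.1). -/
theorem exists_good_realization :
    ∃ c : ℝ, 0 < c ∧ ∃ n₀ : ℕ,
      ∀ n : ℕ, n₀ ≤ n → ∀ b₂ : ℝ, 0 < b₂ →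
        ∀ K : Set (E n), IsConvexBody K → volume K = 1 → (∫ x in K, x) = 0 →
          sphereProb n {θ : sphere (0 : E n) 1 | psi2Norm K (θ : E n) ≤ b₂} ≥
            ENNReal.ofReal (Real.exp (-1 / Real.sqrt n)) →
          ∃ θ : Fin ⌊(n : ℝ) ^ (3 / 2 : ℝ) / 2⌋₊ → E n,
            (∀ i, ‖θ i‖ = 1) ∧
            (∀ i, psi2Norm K (θ i) ≤ b₂) ∧
            (volume (absconv θ)).toReal ^ (1 / (n : ℝ)) ≥
              c * Real.sqrt (Real.log (Real.sqrt n)) / n := by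
  obtain ⟨n₀, hn₀⟩ := eventually_atTop.mp ((eventually_ge_atTop 2).and <|
    (tendsto_capHeight.eventually_lt_const one_half_pos).and <|
      eventually_inv_sqrt_le_capBound_div_four.and eventually_exp_neg_lt_capHeight_pow)
  refine ⟨1 / 4, by norm_num, n₀, fun n hn b₂ _ K _ _ _ hG => ?_⟩
  obtain ⟨hn2, hs1, hcap, hexp⟩ := hn₀ n hn
  have : NeZero n := ⟨by omega⟩
  have hs0 : 0 < capHeight n := capHeight_pos hn2
  have hG' : 1 - ENNReal.ofReal (capBound n (capHeight n) / 4) ≤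
      sphereProb n {θ | psi2Norm K θ ≤ b₂} :=
    (tsub_le_tsub_left (ENNReal.ofReal_le_ofReal hcap) 1).trans
      ((one_sub_ofReal_le_ofReal_exp (by positivity)).trans (neg_div (√n) 1 ▸ hG))
  obtain ⟨θ, hθG, hθ⟩ := exists_forall_mem_sphereProb_uncovered_le hn2 hs0 hs1 hG'
    ⌊(n : ℝ) ^ (3 / 2 : ℝ) / 2⌋₊
  have hcover := exists_le_abs_inner_of_sphereProb_lt hs0 (by linarith) θ
    (hθ.trans_lt ((ENNReal.ofReal_lt_ofReal_iff (by positivity)).mpr hexp))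
  refine ⟨fun i => θ i, fun i => norm_eq_of_mem_sphere (θ i), hθG, ?_⟩
  calc 1 / 4 * √(log √n) / n ≤ capHeight n / √n := sqrt_log_sqrt_div_le_capHeight_div_sqrt n
    _ = 2 * (capHeight n / 2) / √n := by ring
    _ ≤ _ := le_volume_absconv_rpow _ (by positivity) hcover
end
end

section
/- For every n ≥ 1 and every convex body K ⊂ ℝⁿ, the Kovner–Besicovitch measure of symmetry satisfies Δ_KB(K) ≥ 2^{−n}; that is, there exists x ∈ ℝⁿ with |K ∩ (x − K)| ≥ 2^{−n} |K|. -/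
open MeasureTheory Metric Set
open scoped ENNReal Pointwise RealInnerProductSpace

noncomputable section

/-! The function `x ↦ |K ∩ (x - K)|` is the convolution `1_K ⋆ 1_K`, so its integral is `|K|²`.
It vanishes outside `K + K = 2K`, whose volume is `2ⁿ|K|`; hence its maximum is at least its
average `|K|² / (2ⁿ|K|) = 2⁻ⁿ|K|` over `2K`. -/

namespace MeasureTheory

variable {G : Type*} [MeasurableSpace G]

@[to_additive]
theorem lintegral_mlconvolution [Group G] [MeasurableMul₂ G] [MeasurableInv G] {μ : Measure G}
    [μ.IsMulLeftInvariant] [SFinite μ] {f g : G → ℝ≥0∞} (hf : AEMeasurable f μ)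
    (hg : AEMeasurable g μ) :
    ∫⁻ x, (f ⋆ₘₗ[μ] g) x ∂μ = (∫⁻ x, f x ∂μ) * ∫⁻ x, g x ∂μ := by
  simp only [mlconvolution_def]
  rw [lintegral_lintegral_swap (by fun_prop), ← lintegral_mul_const'' _ hf]
  refine lintegral_congr fun y => ?_
  exact (lintegral_mul_left_eq_self (fun z => f y * g z) y⁻¹).trans (lintegral_const_mul'' _ hg)

theorem indicator_one_lconvolution_indicator_one [AddCommGroup G] [MeasurableAdd₂ G]
    [MeasurableNeg G] (μ : Measure G) {K : Set G} (hK : MeasurableSet K) (x : G) :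
    (K.indicator 1 ⋆ₗ[μ] K.indicator 1) x = μ (K ∩ ({x} - K)) := by
  have hpre : {x} - K = (fun y => -y + x) ⁻¹' K := by
    ext y
    rw [Set.singleton_sub, mem_preimage, neg_add_eq_sub]
    exact ⟨by rintro ⟨z, hz, rfl⟩; simpa using hz, fun h => ⟨x - y, h, sub_sub_cancel x y⟩⟩
  rw [lconvolution_def, hpre,
    ← lintegral_indicator_one (hK.inter (hK.preimage (by fun_prop)))]
  refine lintegral_congr fun y => ?_
  by_cases hy : y ∈ K <;> by_cases hxy : -y + x ∈ K <;> simp [hy, hxy]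

theorem lintegral_measure_inter_singleton_sub [AddCommGroup G] [MeasurableAdd₂ G]
    [MeasurableNeg G] {μ : Measure G} [μ.IsAddLeftInvariant] [SFinite μ] {K : Set G} (hK : MeasurableSet K) :
    ∫⁻ x, μ (K ∩ ({x} - K)) ∂μ = μ K * μ K := by
  have hind : Measurable (K.indicator (1 : G → ℝ≥0∞)) := measurable_one.indicator hK
  simp_rw [← indicator_one_lconvolution_indicator_one μ hK,
    lintegral_lconvolution hind.aemeasurable hind.aemeasurable, lintegral_indicator_one hK]

end MeasureTheory

theorem Set.mem_add_of_inter_singleton_sub_nonempty {G : Type*} [AddCommGroup G] {s t : Set G}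
    {x : G} (h : (s ∩ ({x} - t)).Nonempty) : x ∈ s + t := by
  obtain ⟨_, hys, w, hw, z, hzt, rfl⟩ := h
  exact ⟨w - z, hys, z, hzt, (sub_add_cancel w z).trans hw⟩

section Convex

variable {V : Type*} [NormedAddCommGroup V] [NormedSpace ℝ V] [MeasurableSpace V] [BorelSpace V]
  [FiniteDimensional ℝ V] (μ : Measure V) [μ.IsAddHaarMeasure] {K : Set V}

theorem Convex.addHaar_add_self (hK : Convex ℝ K) :
    μ (K + K) = 2 ^ Module.finrank ℝ V * μ K := by
  have h2K : K + K = (2 : ℝ) • K := by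
    simpa [one_add_one_eq_two] using (hK.add_smul zero_le_one zero_le_one).symm
  rw [h2K, Measure.addHaar_smul_of_nonneg μ zero_le_two, ENNReal.ofReal_pow zero_le_two,
    ENNReal.ofReal_ofNat]

theorem Convex.exists_addHaar_inter_singleton_sub_ge (hK : Convex ℝ K) (hKc : IsCompact K) :
    ∃ x, μ K / 2 ^ Module.finrank ℝ V ≤ μ (K ∩ ({x} - K)) := by
  rcases eq_or_ne (μ K) 0 with hK0 | hK0
  · exact ⟨0, by simp [hK0]⟩
  have hKtop : μ K ≠ ∞ := hKc.measure_lt_top.ne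
  have h2 : (2 : ℝ≥0∞) ^ Module.finrank ℝ V ≠ 0 := by positivity
  have hsupp : Function.support (fun x => μ (K ∩ ({x} - K))) ⊆ K + K := fun x hx =>
    Set.mem_add_of_inter_singleton_sub_nonempty (nonempty_of_measure_ne_zero hx)
  have hint : ∫⁻ x in K + K, μ (K ∩ ({x} - K)) ∂μ = μ K * μ K := by
    rw [setLIntegral_eq_of_support_subset hsupp,
      lintegral_measure_inter_singleton_sub hKc.measurableSet]
  obtain ⟨x, -, hx⟩ := exists_setLAverage_le (μ := μ)
    (by rw [hK.addHaar_add_self μ]; exact mul_ne_zero h2 hK0)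
    (hKc.add hKc).measurableSet.nullMeasurableSet
    (by rw [hint]; exact ENNReal.mul_ne_top hKtop hKtop)
  refine ⟨x, le_of_eq_of_le ?_ hx⟩
  rw [setLAverage_eq, hint, hK.addHaar_add_self μ, mul_comm (2 ^ _) (μ K),
    ENNReal.mul_div_mul_left _ _ hK0 hKtop]

end Convex

theorem le_deltaKB {n : ℕ} {K : Set (E n)} (hK : volume K ≠ ∞) (x : E n) :
    (volume (K ∩ (({x} : Set (E n)) - K))).toReal / (volume K).toReal ≤ deltaKB K := by
  unfold deltaKB
  refine le_ciSup (f := fun y : E n =>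
    (volume (K ∩ (({y} : Set (E n)) - K))).toReal / (volume K).toReal) ⟨1, ?_⟩ x
  rintro _ ⟨y, rfl⟩
  exact div_le_one_of_le₀ (ENNReal.toReal_mono hK (measure_mono inter_subset_left))
    ENNReal.toReal_nonneg

theorem deltaKB_ge_two_pow_neg_general (n : ℕ) (K : Set (E n))
    (hK : IsConvexBody K) :
    deltaKB K ≥ (2 : ℝ) ^ (-(n : ℝ)) ∧
      ∃ x : E n, volume (K ∩ (({x} : Set (E n)) - K)) ≥ volume K / 2 ^ n := by
  obtain ⟨hconv, hcomp, hint⟩ := hK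
  obtain ⟨x, hx⟩ := hconv.exists_addHaar_inter_singleton_sub_ge volume hcomp
  rw [finrank_euclideanSpace_fin] at hx
  refine ⟨?_, x, hx⟩
  have hK0 : volume K ≠ 0 := fun h =>
    (isOpen_interior.measure_pos volume hint).ne' (measure_mono_null interior_subset h)
  have hKtop : volume K ≠ ∞ := hcomp.measure_lt_top.ne
  calc (2 : ℝ) ^ (-(n : ℝ)) = (volume K / 2 ^ n).toReal / (volume K).toReal := by
        rw [ENNReal.toReal_div, ENNReal.toReal_pow, ENNReal.toReal_ofNat, Real.rpow_neg zero_le_two,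
          Real.rpow_natCast]
        field_simp [ENNReal.toReal_ne_zero.2 ⟨hK0, hKtop⟩]
    _ ≤ (volume (K ∩ (({x} : Set (E n)) - K))).toReal / (volume K).toReal := by
        gcongr
        exact measure_ne_top_of_subset inter_subset_left hKtop
    _ ≤ deltaKB K := le_deltaKB hKtop x

/-- The trivial lower bound `Δ_KB(K) ≥ 2^{-n}`. -/
theorem deltaKB_ge_two_pow_neg (n : ℕ) (hn : 1 ≤ n) (K : Set (E n))
    (hK : IsConvexBody K) :
    deltaKB K ≥ (2 : ℝ) ^ (-(n : ℝ)) ∧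
      ∃ x : E n, volume (K ∩ (({x} : Set (E n)) - K)) ≥ volume K / 2 ^ n :=
  deltaKB_ge_two_pow_neg_general n K hK
end
end
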